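/- For n ≥ 2, 1 ≤ d ≤ n, define G : Ω_n → Ω_n as the block-diagonal matrix function G(X) = diag(M_d(X), (tr(X)/n)·I_{n−d}), where M_d(X) is the d×d companion-type matrix with ones on the subdiagonal, tr(X)/n in the top-right corner, and zeros elsewhere (and M_1(X) = [tr(X)/n]). Then: (i) G maps Ω_n into Ω_n; (ii) r(G(X)) = |tr(X)/n|^{1/d} for all X ∈ Ω_n; (iii) G(0) is nilpotent and the degree of the minimal polynomial of G(0) equals d. -/

import Mathlib

open Complex Polynomial

/-- The spectral radius of an n×n complex matrix. -/
noncomputable def specRad {n : ℕ} (A : Matrix (Fin n) (Fin n) ℂ) : ℝ :=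
  sSup ((fun z : ℂ => ‖z‖) '' spectrum ℂ A)

/-- The block-diagonal map G(X) = diag(M_d(X), (tr X / n)·I_{n−d}), where M_d(X) is the
d×d companion-type block with ones on the subdiagonal, tr(X)/n in the top-right corner
and zeros elsewhere (M_1(X) = [tr X / n]). -/
noncomputable def Gmap (n d : ℕ) (X : Matrix (Fin n) (Fin n) ℂ) :
    Matrix (Fin n) (Fin n) ℂ :=
  fun i j =>
    if (i : ℕ) < d ∧ (j : ℕ) < d then
      (if (i : ℕ) = 0 ∧ (j : ℕ) = d - 1 then X.trace / n else 0) +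
        (if (i : ℕ) = (j : ℕ) + 1 then 1 else 0)
    else if (i : ℕ) = (j : ℕ) ∧ d ≤ (i : ℕ) then X.trace / n else 0

/-! With `c = tr X / n`, the matrix `G(X)` acts on the first `d` coordinates as the companion
matrix of `z ^ d - c` and on the remaining ones as `c • 1`. Its eigenvalues are therefore the
`d`-th roots of `c`, all of modulus `‖c‖ ^ (1 / d)`, and possibly `c` itself, which is no larger
because `‖c‖ ≤ r(X) < 1`: the trace is the sum of the `n` eigenvalues. At `X = 0` it is the shift
`e_j ↦ e_(j+1)` on the first `d` coordinates, so its `d`-th power vanishes while its `(d-1)`-st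
does not, and its minimal polynomial is `z ^ d`. -/

open scoped Matrix

theorem Matrix.mem_spectrum_iff_exists_mulVec_eq_smul {ι K : Type*} [Fintype ι] [DecidableEq ι]
    [Field K] {A : Matrix ι ι K} {μ : K} :
    μ ∈ spectrum K A ↔ ∃ v ≠ 0, A *ᵥ v = μ • v := by
  simp only [← Matrix.spectrum_toLin', ← Module.End.hasEigenvalue_iff_mem_spectrum,
    Module.End.hasEigenvalue_iff, Submodule.ne_bot_iff, Module.End.mem_eigenspace_iff,
    Matrix.toLin'_apply]
  exact ⟨fun ⟨v, hv, h0⟩ => ⟨v, h0, hv⟩, fun ⟨v, h0, hv⟩ => ⟨v, hv, h0⟩⟩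

theorem natDegree_minpoly_eq_of_pow_eq_zero {K A : Type*} [Field K] [Ring A] [Algebra K A]
    {a : A} {k : ℕ} (hk : a ^ k = 0) (hk' : a ^ (k - 1) ≠ 0) :
    (minpoly K a).natDegree = k := by
  have hint : IsIntegral K a := ⟨X ^ k, monic_X_pow k, by simp [hk]⟩
  obtain ⟨m, hmk, hassoc⟩ :=
    (dvd_prime_pow prime_X k).mp (minpoly.dvd K a (by simp [hk]))
  have hmin : minpoly K a = X ^ m := eq_of_monic_of_associated (minpoly.monic hint)
    (monic_X_pow m) hassoc
  have hm : a ^ m = 0 := by simpa [hmin] using minpoly.aeval K a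
  rw [hmin, natDegree_X_pow]
  by_contra hne
  exact hk' (by rw [show k - 1 = m + (k - 1 - m) by omega, pow_add, hm, zero_mul])

theorem specRad_nonneg {n : ℕ} (A : Matrix (Fin n) (Fin n) ℂ) : 0 ≤ specRad A :=
  Real.sSup_nonneg (by rintro _ ⟨z, -, rfl⟩; exact norm_nonneg z)

theorem norm_le_specRad {n : ℕ} {A : Matrix (Fin n) (Fin n) ℂ} {μ : ℂ}
    (hμ : μ ∈ spectrum ℂ A) : ‖μ‖ ≤ specRad A :=
  le_csSup (A.finite_spectrum.image _).bddAbove ⟨μ, hμ, rfl⟩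

theorem norm_trace_le_mul_specRad {n : ℕ} (A : Matrix (Fin n) (Fin n) ℂ) :
    ‖A.trace‖ ≤ n * specRad A := by
  have hcard : Multiset.card A.charpoly.roots = n := by
    rw [IsAlgClosed.card_roots_eq_natDegree, A.charpoly_natDegree_eq_dim, Fintype.card_fin]
  calc ‖A.trace‖ ≤ (A.charpoly.roots.map (‖·‖)).sum := by
        rw [A.trace_eq_sum_roots_charpoly]; exact norm_multiset_sum_le _
    _ ≤ Multiset.card (A.charpoly.roots.map (‖·‖)) • specRad A := by
        refine Multiset.sum_le_card_nsmul _ _ ?_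
        intro x hx
        obtain ⟨μ, hμ, rfl⟩ := Multiset.mem_map.mp hx
        exact norm_le_specRad (A.mem_spectrum_of_isRoot_charpoly (isRoot_of_mem_roots hμ))
    _ = n * specRad A := by rw [Multiset.card_map, hcard, nsmul_eq_mul]

theorem norm_trace_div_le_specRad {n : ℕ} (A : Matrix (Fin n) (Fin n) ℂ) :
    ‖A.trace / n‖ ≤ specRad A := by
  rw [norm_div, Complex.norm_natCast]
  exact div_le_of_le_mul₀ n.cast_nonneg (specRad_nonneg A)
    (by rw [mul_comm]; exact norm_trace_le_mul_specRad A)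

theorem norm_eq_rpow_of_pow_eq {d : ℕ} (hd : d ≠ 0) {μ c : ℂ} (h : μ ^ d = c) :
    ‖μ‖ = ‖c‖ ^ ((1 : ℝ) / d) := by
  rw [← h, norm_pow, one_div, Real.pow_rpow_inv_natCast (norm_nonneg μ) hd]

theorem specRad_eq_rpow_of_spectrum {n d : ℕ} (hd : d ≠ 0) {A : Matrix (Fin n) (Fin n) ℂ}
    {c : ℂ} (hc : ‖c‖ ≤ 1) (hroots : {μ | μ ^ d = c} ⊆ spectrum ℂ A)
    (hspec : spectrum ℂ A ⊆ {μ | μ ^ d = c} ∪ {c}) :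
    specRad A = ‖c‖ ^ ((1 : ℝ) / d) := by
  obtain ⟨μ, hμ⟩ := IsAlgClosed.exists_pow_nat_eq c (Nat.pos_of_ne_zero hd)
  refine IsGreatest.csSup_eq ⟨⟨μ, hroots hμ, norm_eq_rpow_of_pow_eq hd hμ⟩, ?_⟩
  rintro _ ⟨ν, hν, rfl⟩
  rcases hspec hν with hν | rfl
  · exact (norm_eq_rpow_of_pow_eq hd hν).le
  · refine Real.self_le_rpow_of_le_one (norm_nonneg _) hc ?_
    rw [div_le_one (by positivity)]
    exact_mod_cast Nat.one_le_iff_ne_zero.mpr hd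

section Gmap

variable {n d : ℕ} (X : Matrix (Fin n) (Fin n) ℂ)

theorem Gmap_mulVec_apply_of_eq_zero (hd1 : 1 ≤ d) (hdn : d ≤ n) (v : Fin n → ℂ) {i : Fin n}
    (hi : (i : ℕ) = 0) :
    (Gmap n d X *ᵥ v) i = X.trace / n * v ⟨d - 1, by omega⟩ := by
  rw [Matrix.mulVec, dotProduct, Fintype.sum_eq_single ⟨d - 1, by omega⟩]
  · simp [Gmap, hi]
    omega
  · intro j hj
    have hj' : (j : ℕ) ≠ d - 1 := Fin.val_ne_of_ne hj
    simp only [Gmap, hi]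
    split_ifs <;> simp_all; omega

theorem Gmap_mulVec_apply_of_pos_of_lt (v : Fin n → ℂ) {i : Fin n} (hi0 : 0 < (i : ℕ))
    (hid : (i : ℕ) < d) :
    (Gmap n d X *ᵥ v) i = v ⟨i - 1, by omega⟩ := by
  rw [Matrix.mulVec, dotProduct, Fintype.sum_eq_single ⟨i - 1, by omega⟩]
  · simp only [Gmap]
    rw [if_pos (by omega), if_neg (by omega), if_pos (by omega), zero_add, one_mul]
  · intro j hj
    have hj' : (j : ℕ) ≠ i - 1 := Fin.val_ne_of_ne hj
    simp only [Gmap]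
    split_ifs <;> simp_all; omega

theorem Gmap_mulVec_apply_of_le (v : Fin n → ℂ) {i : Fin n} (hi : d ≤ (i : ℕ)) :
    (Gmap n d X *ᵥ v) i = X.trace / n * v i := by
  rw [Matrix.mulVec, dotProduct, Fintype.sum_eq_single i]
  · simp [Gmap, hi]
  · intro j hj
    have hj' : (j : ℕ) ≠ i := Fin.val_ne_of_ne hj
    simp only [Gmap]
    split_ifs <;> simp_all; omega

theorem mem_spectrum_Gmap_of_pow_eq (hd1 : 1 ≤ d) (hdn : d ≤ n) {μ : ℂ}
    (hμ : μ ^ d = X.trace / n) : μ ∈ spectrum ℂ (Gmap n d X) := by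
  rw [Matrix.mem_spectrum_iff_exists_mulVec_eq_smul]
  refine ⟨fun i => if (i : ℕ) < d then μ ^ (d - 1 - i) else 0, fun h => ?_, funext fun i => ?_⟩
  · simpa [show d - 1 < d by omega] using congrFun h ⟨d - 1, by omega⟩
  rw [Pi.smul_apply, smul_eq_mul]
  rcases lt_or_ge (i : ℕ) d with hid | hid
  · rcases Nat.eq_zero_or_pos i with hi0 | hi0
    · rw [Gmap_mulVec_apply_of_eq_zero X hd1 hdn _ hi0]
      simp only [hi0, if_pos (show 0 < d by omega), if_pos (show d - 1 < d by omega),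
        Nat.sub_self, Nat.sub_zero, pow_zero, mul_one, ← hμ]
      rw [← pow_succ', Nat.sub_add_cancel hd1]
    · rw [Gmap_mulVec_apply_of_pos_of_lt X _ hi0 hid]
      simp only [if_pos hid, if_pos (show (i : ℕ) - 1 < d by omega), ← pow_succ']
      congr 1
      omega
  · rw [Gmap_mulVec_apply_of_le X _ hid]
    simp [hid.not_gt]

theorem Gmap_eigenvector_apply (hd1 : 1 ≤ d) (hdn : d ≤ n) {v : Fin n → ℂ} {μ : ℂ}
    (hv : Gmap n d X *ᵥ v = μ • v) (m : ℕ) (i : Fin n) (him : (i : ℕ) + m = d - 1) :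
    v i = μ ^ m * v ⟨d - 1, by omega⟩ := by
  induction m generalizing i with
  | zero => simp [← him]
  | succ m ih =>
    have hnext := congrFun hv ⟨i + 1, by omega⟩
    rw [Gmap_mulVec_apply_of_pos_of_lt X _ (by simp) (by simp; omega), Pi.smul_apply,
      smul_eq_mul, ih ⟨i + 1, by omega⟩ (by simp; omega)] at hnext
    simpa [pow_succ', mul_assoc] using hnext

theorem pow_eq_or_eq_of_mem_spectrum_Gmap (hd1 : 1 ≤ d) (hdn : d ≤ n) {μ : ℂ}
    (hμ : μ ∈ spectrum ℂ (Gmap n d X)) : μ ^ d = X.trace / n ∨ μ = X.trace / n := by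
  obtain ⟨v, hv0, hv⟩ := Matrix.mem_spectrum_iff_exists_mulVec_eq_smul.mp hμ
  by_cases htail : ∃ i : Fin n, d ≤ (i : ℕ) ∧ v i ≠ 0
  · obtain ⟨i, hi, hvi⟩ := htail
    have hrow := congrFun hv i
    rw [Gmap_mulVec_apply_of_le X _ hi, Pi.smul_apply, smul_eq_mul] at hrow
    exact Or.inr (mul_right_cancel₀ hvi hrow).symm
  push Not at htail
  have hlast : v ⟨d - 1, by omega⟩ ≠ 0 := by
    refine fun h0 => hv0 (funext fun i => ?_)
    rcases lt_or_ge (i : ℕ) d with hid | hid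
    · rw [Gmap_eigenvector_apply X hd1 hdn hv (d - 1 - i) i (by omega), h0, mul_zero,
        Pi.zero_apply]
    · exact htail i hid
  have hrow := congrFun hv ⟨0, by omega⟩
  rw [Gmap_mulVec_apply_of_eq_zero X hd1 hdn _ rfl, Pi.smul_apply, smul_eq_mul,
    Gmap_eigenvector_apply X hd1 hdn hv (d - 1) ⟨0, by omega⟩ (by simp), ← mul_assoc,
    ← pow_succ', Nat.sub_add_cancel hd1] at hrow
  exact Or.inl (mul_right_cancel₀ hlast hrow).symm

end Gmap

section GmapZero

variable {n d : ℕ}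

theorem Gmap_zero_apply (i j : Fin n) :
    Gmap n d 0 i j = if (i : ℕ) = j + 1 ∧ (i : ℕ) < d then 1 else 0 := by
  simp only [Gmap, Matrix.trace_zero, zero_div]
  split_ifs <;> simp_all; omega

theorem Gmap_zero_pow_succ_apply (k : ℕ) (i j : Fin n) :
    (Gmap n d 0 ^ (k + 1)) i j = if (i : ℕ) = j + (k + 1) ∧ (i : ℕ) < d then 1 else 0 := by
  induction k generalizing i with
  | zero => simpa using Gmap_zero_apply i j
  | succ k ih =>
    rw [pow_succ', Matrix.mul_apply]
    rcases Nat.eq_zero_or_pos i with hi0 | hi0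
    · rw [if_neg (by omega), Finset.sum_eq_zero fun l _ => by
        rw [Gmap_zero_apply, if_neg (by omega), zero_mul]]
    · rw [Fintype.sum_eq_single ⟨i - 1, by omega⟩ fun l hl => by
        rw [Gmap_zero_apply, if_neg fun h => hl (Fin.ext (by simp; omega)), zero_mul]]
      simp only [Gmap_zero_apply, ih]
      split_ifs <;> first | omega | simp

theorem Gmap_zero_pow_self (hd1 : 1 ≤ d) : Gmap n d 0 ^ d = 0 := by
  ext i j
  rw [← Nat.sub_add_cancel hd1, Gmap_zero_pow_succ_apply, if_neg (by omega), Matrix.zero_apply]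

theorem Gmap_zero_pow_pred_apply (hd1 : 1 ≤ d) (hdn : d ≤ n) :
    (Gmap n d 0 ^ (d - 1)) ⟨d - 1, by omega⟩ ⟨0, by omega⟩ = 1 := by
  obtain ⟨k, rfl⟩ : ∃ k, d = k + 1 := ⟨d - 1, by omega⟩
  cases k with
  | zero => simp
  | succ k => simp [Gmap_zero_pow_succ_apply]

theorem Gmap_zero_pow_pred_ne_zero (hd1 : 1 ≤ d) (hdn : d ≤ n) :
    Gmap n d 0 ^ (d - 1) ≠ 0 := fun h => by
  simpa [h] using Gmap_zero_pow_pred_apply hd1 hdn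

end GmapZero

theorem Gmap_properties_general (n d : ℕ) (hd1 : 1 ≤ d) (hdn : d ≤ n) :
    (∀ X : Matrix (Fin n) (Fin n) ℂ, specRad X < 1 → specRad (Gmap n d X) < 1) ∧
    (∀ X : Matrix (Fin n) (Fin n) ℂ, specRad X < 1 →
      specRad (Gmap n d X) = ‖X.trace / (n : ℂ)‖ ^ ((1 : ℝ) / d)) ∧
    IsNilpotent (Gmap n d 0) ∧ (minpoly ℂ (Gmap n d 0)).natDegree = d := by
  have hnorm : ∀ X : Matrix (Fin n) (Fin n) ℂ, specRad X < 1 → ‖X.trace / (n : ℂ)‖ < 1 :=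
    fun X hX => (norm_trace_div_le_specRad X).trans_lt hX
  have hrad : ∀ X : Matrix (Fin n) (Fin n) ℂ, specRad X < 1 →
      specRad (Gmap n d X) = ‖X.trace / (n : ℂ)‖ ^ ((1 : ℝ) / d) := fun X hX =>
    specRad_eq_rpow_of_spectrum (by omega) (hnorm X hX).le
      (fun _ hμ => mem_spectrum_Gmap_of_pow_eq X hd1 hdn hμ)
      (fun _ hμ => pow_eq_or_eq_of_mem_spectrum_Gmap X hd1 hdn hμ)
  refine ⟨fun X hX => ?_, hrad, ⟨d, Gmap_zero_pow_self hd1⟩,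
    natDegree_minpoly_eq_of_pow_eq_zero (Gmap_zero_pow_self hd1)
      (Gmap_zero_pow_pred_ne_zero hd1 hdn)⟩
  rw [hrad X hX]
  exact Real.rpow_lt_one (norm_nonneg _) (hnorm X hX) (by positivity)

/-- (i) G maps Ω_n to Ω_n; (ii) r(G(X)) = |tr(X)/n|^{1/d}; (iii) G(0) is nilpotent with
minimal polynomial of degree d. -/
theorem Gmap_properties (n d : ℕ) (hn : 2 ≤ n) (hd1 : 1 ≤ d) (hdn : d ≤ n) :
    (∀ X : Matrix (Fin n) (Fin n) ℂ, specRad X < 1 → specRad (Gmap n d X) < 1) ∧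
    (∀ X : Matrix (Fin n) (Fin n) ℂ, specRad X < 1 →
      specRad (Gmap n d X) = ‖X.trace / (n : ℂ)‖ ^ ((1 : ℝ) / d)) ∧
    IsNilpotent (Gmap n d 0) ∧ (minpoly ℂ (Gmap n d 0)).natDegree = d :=
  Gmap_properties_general n d hd1 hdn
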